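/- arXiv:1709.09416 — 2 statements merged into one kernel-verified Lean document; each statement's English description precedes it below -/
import Mathlib

section
/- Let W be a pointy potential on ℝ^d with constants λ ∈ ℝ and w_∞ ≥ 0, let ρ^{ini} be a probability measure on ℝ^d with finite second moment, and assume the strict 1/2-CFL condition w_∞ Σ_{i=1}^d Δt/Δx_i < 1/2. Let ρ_J^0 := ρ^{ini}(C_J) and let (ρ_J^n) be produced by the upwind scheme. Then there exists a constant C ≥ 0, depending only on d, w_∞ and Σ_{i=1}^d Δx_i, such that for all n ∈ ℕ, Σ_{J∈ℤ^d} |x_J|² ρ_J^n ≤ e^{C n Δt} (Σ_{J∈ℤ^d} |x_J|² ρ_J^0 + C). -/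
open MeasureTheory Real Set
open scoped RealInnerProductSpace ENNReal

noncomputable section

/-- `ℝ^d` with the Euclidean structure. -/
abbrev Euc (d : ℕ) := EuclideanSpace ℝ (Fin d)

open Classical in
/-- `∇̂W`: the gradient of `W` away from `0`, and `0` at `0`. -/
def hatGrad {d : ℕ} (W : Euc d → ℝ) (x : Euc d) : Euc d :=
  if x = 0 then 0 else gradient W x

/-- Positive part `r⁺ = max(r,0)`. -/
def pos (r : ℝ) : ℝ := max r 0

/-- Negative part `r⁻ = max(-r,0)`. -/
def neg (r : ℝ) : ℝ := max (-r) 0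

/-- The node `x_J = (J_1 Δx_1, …, J_d Δx_d)`. -/
def node {d : ℕ} (Δx : Fin d → ℝ) (J : Fin d → ℤ) : Euc d :=
  (EuclideanSpace.equiv (Fin d) ℝ).symm (fun i => (J i : ℝ) * Δx i)

/-- The cell `C_J = Π_i [(J_i - 1/2)Δx_i, (J_i + 1/2)Δx_i)`. -/
def cell {d : ℕ} (Δx : Fin d → ℝ) (J : Fin d → ℤ) : Set (Euc d) :=
  {y | ∀ i, ((J i : ℝ) - 1/2) * Δx i ≤ y i ∧ y i < ((J i : ℝ) + 1/2) * Δx i}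

/-- The discrete velocities `(a_i)_J = -Σ_K ρ_K (∇̂W)_i (x_J - x_K)`. -/
def discVel {d : ℕ} (W : Euc d → ℝ) (Δx : Fin d → ℝ) (ρ : (Fin d → ℤ) → ℝ)
    (J : Fin d → ℤ) (i : Fin d) : ℝ :=
  -∑' K : Fin d → ℤ, ρ K * hatGrad W (node Δx J - node Δx K) i

/-- One step of the upwind scheme. -/
def upwindStep {d : ℕ} (Δx : Fin d → ℝ) (Δt : ℝ) (a : (Fin d → ℤ) → Fin d → ℝ)
    (ρ : (Fin d → ℤ) → ℝ) (J : Fin d → ℤ) : ℝ :=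
  ρ J - ∑ i : Fin d, (Δt / Δx i) *
    (pos (a J i) * ρ J - neg (a (J + Pi.single i 1) i) * ρ (J + Pi.single i 1)
      - pos (a (J - Pi.single i 1) i) * ρ (J - Pi.single i 1) + neg (a J i) * ρ J)

/-!
Under the CFL condition the upwind step is the transpose of a Markov kernel on the grid: the mass
at `x_K` stays put or moves to `x_K ± Δx_i e_i` with the nonnegative weights `(Δt / Δx_i) a_i^±`,
so nonnegativity and total mass are preserved. Testing the step against `|x|²` and using
`|x ± h e_i|² = |x|² ± 2 h x_i + h²`, the second moment increases by exactly
`Δt Σ_K ρ_K Σ_i (2 a_i x_{K,i} + |a_i| Δx_i)`. As `|a_i| ≤ w_∞` and `2 |x_i| ≤ 1 + |x|²`, this is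
at most `w_∞ (d + Σ_i Δx_i) Δt (M + 1)`, and a discrete Grönwall inequality gives the bound.
-/

lemma pos_add_neg (r : ℝ) : pos r + neg r = |r| := by
  rcases le_total 0 r with h | h <;> simp [pos, neg, h, abs_of_nonneg, abs_of_nonpos]

lemma pos_sub_neg (r : ℝ) : pos r - neg r = r := by
  rcases le_total 0 r with h | h <;> simp [pos, neg, h]

lemma Summable.mul_of_abs_le {ι : Type*} {f g : ι → ℝ} {w : ℝ} (hf : Summable f)
    (hg : ∀ i, |g i| ≤ w) : Summable fun i => g i * f i :=
  Summable.of_norm_bounded (hf.abs.mul_left w) fun i => by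
    rw [Real.norm_eq_abs, abs_mul]
    exact mul_le_mul_of_nonneg_right (hg i) (abs_nonneg _)

lemma le_exp_mul_of_le_one_add_mul {u : ℕ → ℝ} {c : ℝ} (hu : ∀ n, 0 ≤ u n)
    (hstep : ∀ n, u (n + 1) ≤ (1 + c) * u n) (n : ℕ) : u n ≤ exp (c * n) * u 0 := by
  induction n with
  | zero => simp
  | succ n ih =>
    calc u (n + 1) ≤ (1 + c) * u n := hstep n
      _ ≤ exp c * u n := mul_le_mul_of_nonneg_right (by linarith [add_one_le_exp c]) (hu n)
      _ ≤ exp c * (exp (c * n) * u 0) := by gcongr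
      _ = exp (c * ↑(n + 1)) * u 0 := by rw [← mul_assoc, ← exp_add]; push_cast; ring_nf

section Grid

variable {d : ℕ} (Δx : Fin d → ℝ)

lemma node_apply (J : Fin d → ℤ) (i : Fin d) : node Δx J i = J i * Δx i := rfl

lemma node_add (J K : Fin d → ℤ) : node Δx (J + K) = node Δx J + node Δx K := by
  ext i; simp [node, add_mul]

lemma node_single (i : Fin d) (s : ℤ) :
    node Δx (Pi.single i s) = EuclideanSpace.single i (s * Δx i) := by
  ext j; rcases eq_or_ne j i with rfl | h <;> simp [node, *]

lemma sq_norm_node_add_single (K : Fin d → ℤ) (i : Fin d) (s : ℤ) :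
    ‖node Δx (K + Pi.single i s)‖ ^ 2
      = ‖node Δx K‖ ^ 2 + 2 * (s * Δx i) * node Δx K i + (s * Δx i) ^ 2 := by
  rw [node_add, node_single, norm_add_sq_real, EuclideanSpace.inner_single_right]
  simp [mul_pow]
  ring

end Grid

/-- The transpose of `upwindStep`, acting on test functions `φ` on the grid. -/
def upwindDual {d : ℕ} (Δx : Fin d → ℝ) (Δt : ℝ) (a : (Fin d → ℤ) → Fin d → ℝ)
    (φ : (Fin d → ℤ) → ℝ) (K : Fin d → ℤ) : ℝ :=
  φ K + ∑ i : Fin d, (Δt / Δx i) * (pos (a K i) * (φ (K + Pi.single i 1) - φ K)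
    + neg (a K i) * (φ (K - Pi.single i 1) - φ K))

section Upwind

variable {d : ℕ} {Δx : Fin d → ℝ} {Δt w : ℝ} {a : (Fin d → ℤ) → Fin d → ℝ}
  {ρ φ : (Fin d → ℤ) → ℝ}

lemma upwindStep_nonneg (hΔx : ∀ i, 0 < Δx i) (hΔt : 0 ≤ Δt) (ha : ∀ J i, |a J i| ≤ w)
    (hCFL : w * ∑ i, Δt / Δx i ≤ 1) (hρ : ∀ J, 0 ≤ ρ J) (J : Fin d → ℤ) :
    0 ≤ upwindStep Δx Δt a ρ J := by
  have hc : ∀ i, 0 ≤ Δt / Δx i := fun i => div_nonneg hΔt (hΔx i).le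
  have hsplit : upwindStep Δx Δt a ρ J = ρ J - ∑ i, Δt / Δx i * |a J i| * ρ J
      + ∑ i, Δt / Δx i * (neg (a (J + Pi.single i 1) i) * ρ (J + Pi.single i 1)
        + pos (a (J - Pi.single i 1) i) * ρ (J - Pi.single i 1)) := by
    rw [upwindStep, sub_add, ← Finset.sum_sub_distrib]
    congr 1
    refine Finset.sum_congr rfl fun i _ => ?_
    rw [← pos_add_neg]
    ring
  have hout : ∑ i, Δt / Δx i * |a J i| * ρ J ≤ ρ J := by
    calc ∑ i, Δt / Δx i * |a J i| * ρ J ≤ ∑ i, Δt / Δx i * w * ρ J := by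
          gcongr with i
          · exact hρ J
          · exact hc i
          · exact ha J i
      _ = (w * ∑ i, Δt / Δx i) * ρ J := by
          rw [← Finset.sum_mul, Finset.mul_sum]; simp only [mul_comm]
      _ ≤ ρ J := mul_le_of_le_one_left (hρ J) hCFL
  have hin : 0 ≤ ∑ i, Δt / Δx i * (neg (a (J + Pi.single i 1) i) * ρ (J + Pi.single i 1)
        + pos (a (J - Pi.single i 1) i) * ρ (J - Pi.single i 1)) :=
    Finset.sum_nonneg fun i _ => mul_nonneg (hc i) (add_nonneg
      (mul_nonneg (le_max_right _ _) (hρ _)) (mul_nonneg (le_max_right _ _) (hρ _)))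
  linarith

theorem exists_hasSum_mul_upwindStep (ha : ∀ J i, |a J i| ≤ w)
    (hφρ : ∀ v, Summable fun K => φ (K + v) * ρ K) :
    ∃ s, HasSum (fun J => φ J * upwindStep Δx Δt a ρ J) s ∧
      HasSum (fun K => upwindDual Δx Δt a φ K * ρ K) s := by
  have hpos : ∀ J i, |pos (a J i)| ≤ w := fun J i => by
    rw [abs_of_nonneg (le_max_right _ _)]
    exact (max_le (le_abs_self _) (abs_nonneg _)).trans (ha J i)
  have hneg : ∀ J i, |neg (a J i)| ≤ w := fun J i => by
    rw [abs_of_nonneg (le_max_right _ _)]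
    exact (max_le (neg_le_abs _) (abs_nonneg _)).trans (ha J i)
  have hR : ∀ i, Summable fun K => pos (a K i) * (φ (K + Pi.single i 1) * ρ K) :=
    fun i => (hφρ _).mul_of_abs_le (hpos · i)
  have hL : ∀ i, Summable fun K => neg (a K i) * (φ (K - Pi.single i 1) * ρ K) := fun i => by
    simpa only [sub_eq_add_neg] using (hφρ (-Pi.single i 1)).mul_of_abs_le (hneg · i)
  have hD : ∀ i, Summable fun K => |a K i| * (φ K * ρ K) := fun i => by
    simpa only [add_zero] using (hφρ 0).mul_of_abs_le (fun K => (abs_abs (a K i)).le.trans (ha K i))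
  have h0 : HasSum (fun K => φ K * ρ K) (∑' K, φ K * ρ K) := by
    simpa only [add_zero] using (hφρ 0).hasSum
  have hR' : ∀ i, HasSum (fun J => pos (a (J - Pi.single i 1) i) * (φ J * ρ (J - Pi.single i 1)))
      (∑' K, pos (a K i) * (φ (K + Pi.single i 1) * ρ K)) := fun i => by
    simpa [Function.comp_def] using (Equiv.subRight (Pi.single i 1)).hasSum_iff.mpr (hR i).hasSum
  have hL' : ∀ i, HasSum (fun J => neg (a (J + Pi.single i 1) i) * (φ J * ρ (J + Pi.single i 1)))
      (∑' K, neg (a K i) * (φ (K - Pi.single i 1) * ρ K)) := fun i => by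
    simpa [Function.comp_def] using (Equiv.addRight (Pi.single i 1)).hasSum_iff.mpr (hL i).hasSum
  refine ⟨_, (h0.add (hasSum_sum (s := Finset.univ) fun i _ =>
      (((hR' i).add (hL' i)).sub (hD i).hasSum).mul_left (Δt / Δx i))).congr_fun fun J => ?_,
    (h0.add (hasSum_sum (s := Finset.univ) fun i _ =>
      (((hR i).hasSum.add (hL i).hasSum).sub (hD i).hasSum).mul_left (Δt / Δx i))).congr_fun
      fun K => ?_⟩
  · rw [upwindStep, mul_sub, Finset.mul_sum, sub_eq_add_neg, ← Finset.sum_neg_distrib]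
    congr 1
    refine Finset.sum_congr rfl fun i _ => ?_
    rw [← pos_add_neg]
    ring
  · rw [upwindDual, add_mul, Finset.sum_mul]
    congr 1
    refine Finset.sum_congr rfl fun i _ => ?_
    rw [← pos_add_neg]
    ring

end Upwind

structure IsGridProbability {d : ℕ} (Δx : Fin d → ℝ) (ρ : (Fin d → ℤ) → ℝ) : Prop where
  nonneg : ∀ J, 0 ≤ ρ J
  hasSum_one : HasSum ρ 1
  summable_sq_norm : Summable fun J => ‖node Δx J‖ ^ 2 * ρ J

def secondMoment {d : ℕ} (Δx : Fin d → ℝ) (ρ : (Fin d → ℤ) → ℝ) : ℝ :=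
  ∑' J, ‖node Δx J‖ ^ 2 * ρ J

section Moment

variable {d : ℕ} {Δx : Fin d → ℝ} {Δt w : ℝ} {a : (Fin d → ℤ) → Fin d → ℝ}
  {ρ : (Fin d → ℤ) → ℝ}

lemma upwindDual_sq_norm_node (hΔx : ∀ i, Δx i ≠ 0) (K : Fin d → ℤ) :
    upwindDual Δx Δt a (fun J => ‖node Δx J‖ ^ 2) K
      = ‖node Δx K‖ ^ 2 + Δt * ∑ i, (2 * a K i * node Δx K i + |a K i| * Δx i) := by
  rw [upwindDual, Finset.mul_sum]
  congr 1
  refine Finset.sum_congr rfl fun i _ => ?_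
  rw [sub_eq_add_neg K, ← Pi.single_neg, sq_norm_node_add_single, sq_norm_node_add_single]
  have hc : Δt / Δx i * Δx i = Δt := div_mul_cancel₀ _ (hΔx i)
  push_cast
  linear_combination (2 * node Δx K i * (pos (a K i) - neg (a K i))
      + Δx i * (pos (a K i) + neg (a K i))) * hc
    + 2 * Δt * node Δx K i * pos_sub_neg (a K i) + Δt * Δx i * pos_add_neg (a K i)

lemma upwindDual_sq_norm_node_le (hΔx : ∀ i, 0 < Δx i) (hΔt : 0 ≤ Δt) (hw : 0 ≤ w)
    {K : Fin d → ℤ} (ha : ∀ i, |a K i| ≤ w) :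
    upwindDual Δx Δt a (fun J => ‖node Δx J‖ ^ 2) K
      ≤ ‖node Δx K‖ ^ 2 + w * (d + ∑ i, Δx i) * Δt * (‖node Δx K‖ ^ 2 + 1) := by
  set r := ‖node Δx K‖
  have hterm : ∀ i, 2 * a K i * node Δx K i + |a K i| * Δx i
      ≤ w * (r ^ 2 + 1) + w * Δx i * (r ^ 2 + 1) := fun i => by
    have hx : |node Δx K i| ≤ r := by simpa [r] using PiLp.norm_apply_le (node Δx K) i
    have hax : a K i * node Δx K i ≤ w * r :=
      (le_abs_self _).trans ((abs_mul _ _).trans_le (mul_le_mul (ha i) hx (abs_nonneg _) hw))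
    have hr : 2 * r ≤ r ^ 2 + 1 := by nlinarith [sq_nonneg (r - 1)]
    have hΔ := (hΔx i).le
    nlinarith [mul_le_mul_of_nonneg_left hr hw, mul_le_mul_of_nonneg_right (ha i) hΔ,
      mul_nonneg (mul_nonneg hw hΔ) (sq_nonneg r)]
  calc upwindDual Δx Δt a (fun J => ‖node Δx J‖ ^ 2) K
      = r ^ 2 + Δt * ∑ i, (2 * a K i * node Δx K i + |a K i| * Δx i) :=
        upwindDual_sq_norm_node (fun i => (hΔx i).ne') K
    _ ≤ r ^ 2 + Δt * ∑ i : Fin d, (w * (r ^ 2 + 1) + w * Δx i * (r ^ 2 + 1)) :=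
        add_le_add le_rfl (mul_le_mul_of_nonneg_left (Finset.sum_le_sum fun i _ => hterm i) hΔt)
    _ = r ^ 2 + w * (d + ∑ i, Δx i) * Δt * (r ^ 2 + 1) := by
        rw [Finset.sum_add_distrib, ← Finset.sum_mul, ← Finset.sum_mul, ← Finset.mul_sum,
          Finset.sum_const, Finset.card_univ, Fintype.card_fin, nsmul_eq_mul]
        ring

lemma IsGridProbability.secondMoment_nonneg (h : IsGridProbability Δx ρ) :
    0 ≤ secondMoment Δx ρ :=
  tsum_nonneg fun J => mul_nonneg (sq_nonneg _) (h.nonneg J)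

lemma IsGridProbability.summable_sq_norm_node_add (h : IsGridProbability Δx ρ)
    (v : Fin d → ℤ) : Summable fun K => ‖node Δx (K + v)‖ ^ 2 * ρ K := by
  refine Summable.of_nonneg_of_le (fun K => mul_nonneg (sq_nonneg _) (h.nonneg K)) (fun K => ?_)
    ((h.summable_sq_norm.mul_left 2).add (h.hasSum_one.summable.mul_left (2 * ‖node Δx v‖ ^ 2)))
  have htri : ‖node Δx (K + v)‖ ≤ ‖node Δx K‖ + ‖node Δx v‖ := node_add Δx K v ▸ norm_add_le _ _
  have hsq : ‖node Δx (K + v)‖ ^ 2 ≤ 2 * ‖node Δx K‖ ^ 2 + 2 * ‖node Δx v‖ ^ 2 := by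
    nlinarith [norm_nonneg (node Δx (K + v)), sq_nonneg (‖node Δx K‖ - ‖node Δx v‖)]
  nlinarith [h.nonneg K]

lemma IsGridProbability.upwindStep (hΔx : ∀ i, 0 < Δx i) (hΔt : 0 ≤ Δt)
    (ha : ∀ J i, |a J i| ≤ w) (hCFL : w * ∑ i, Δt / Δx i ≤ 1) (h : IsGridProbability Δx ρ) :
    IsGridProbability Δx (upwindStep Δx Δt a ρ) := by
  refine ⟨upwindStep_nonneg hΔx hΔt ha hCFL h.nonneg, ?_, ?_⟩
  · obtain ⟨s, hs, hdual⟩ := exists_hasSum_mul_upwindStep (Δx := Δx) (Δt := Δt) (φ := fun _ => 1)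
      ha fun _ => by simpa using h.hasSum_one.summable
    have hs1 : s = 1 := hdual.unique (by simpa [upwindDual] using h.hasSum_one)
    simpa [hs1] using hs
  · obtain ⟨_, hs, -⟩ := exists_hasSum_mul_upwindStep (Δx := Δx) (Δt := Δt)
      (φ := fun J => ‖node Δx J‖ ^ 2) ha h.summable_sq_norm_node_add
    exact hs.summable

lemma secondMoment_upwindStep_le (hΔx : ∀ i, 0 < Δx i) (hΔt : 0 ≤ Δt)
    (hw : 0 ≤ w) (ha : ∀ J i, |a J i| ≤ w) (h : IsGridProbability Δx ρ) :
    secondMoment Δx (upwindStep Δx Δt a ρ)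
      ≤ secondMoment Δx ρ + w * (d + ∑ i, Δx i) * Δt * (secondMoment Δx ρ + 1) := by
  obtain ⟨s, hs, hdual⟩ := exists_hasSum_mul_upwindStep (Δx := Δx) (Δt := Δt)
    (φ := fun J => ‖node Δx J‖ ^ 2) ha h.summable_sq_norm_node_add
  have hM := h.summable_sq_norm.hasSum
  rw [secondMoment, hs.tsum_eq]
  refine hasSum_le (fun K => mul_le_mul_of_nonneg_right
    (upwindDual_sq_norm_node_le hΔx hΔt hw (ha K)) (h.nonneg K)) hdual
    ((hM.add ((hM.add h.hasSum_one).mul_left (w * (d + ∑ i, Δx i) * Δt))).congr_fun fun K => ?_)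
  ring

end Moment

section Velocity

variable {d : ℕ} {W : Euc d → ℝ} {w : ℝ}

lemma norm_hatGrad_le (hw : 0 ≤ w) (hW : ∀ x : Euc d, x ≠ 0 → ‖gradient W x‖ ≤ w) (x : Euc d) :
    ‖hatGrad W x‖ ≤ w := by
  unfold hatGrad
  split_ifs with hx
  · simpa using hw
  · exact hW x hx

lemma abs_discVel_le {Δx : Fin d → ℝ} {ρ : (Fin d → ℤ) → ℝ} (hρ : ∀ K, 0 ≤ ρ K)
    (h1 : HasSum ρ 1) (hW : ∀ x, ‖hatGrad W x‖ ≤ w) (J : Fin d → ℤ) (i : Fin d) :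
    |discVel W Δx ρ J i| ≤ w := by
  have := tsum_of_norm_bounded (f := fun K => ρ K * hatGrad W (node Δx J - node Δx K) i)
    (h1.mul_left w) fun K => by
      rw [norm_mul, Real.norm_of_nonneg (hρ K), mul_comm]
      exact mul_le_mul_of_nonneg_right ((PiLp.norm_apply_le _ i).trans (hW _)) (hρ K)
  simpa [discVel] using this

end Velocity

section Cells

variable {d : ℕ} {Δx : Fin d → ℝ}

lemma mem_cell_iff (hΔx : ∀ i, 0 < Δx i) {y : Euc d} {J : Fin d → ℤ} :
    y ∈ cell Δx J ↔ (fun i => ⌊y i / Δx i + 1 / 2⌋) = J := by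
  simp only [cell, Set.mem_ofPred_eq, funext_iff, Int.floor_eq_iff]
  refine forall_congr' fun i => ?_
  have h1 : ((J i : ℝ) - 1 / 2) * Δx i ≤ y i ↔ (J i : ℝ) ≤ y i / Δx i + 1 / 2 := by
    rw [← le_div_iff₀ (hΔx i)]; constructor <;> intro <;> linarith
  have h2 : y i < ((J i : ℝ) + 1 / 2) * Δx i ↔ y i / Δx i + 1 / 2 < J i + 1 := by
    rw [← div_lt_iff₀ (hΔx i)]; constructor <;> intro <;> linarith
  rw [h1, h2]

lemma pairwise_disjoint_cell (hΔx : ∀ i, 0 < Δx i) :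
    Pairwise (Function.onFun Disjoint (cell Δx)) := fun _ _ hJK =>
  Set.disjoint_left.mpr fun _ hJ hK =>
    hJK (((mem_cell_iff hΔx).mp hJ).symm.trans ((mem_cell_iff hΔx).mp hK))

lemma iUnion_cell (hΔx : ∀ i, 0 < Δx i) : ⋃ J, cell Δx J = Set.univ :=
  Set.eq_univ_of_forall fun _ => Set.mem_iUnion.mpr ⟨_, (mem_cell_iff hΔx).mpr rfl⟩

lemma measurableSet_cell (J : Fin d → ℤ) : MeasurableSet (cell Δx J) := by
  simp only [cell, Set.ofPred_forall]
  exact .iInter fun i => measurableSet_setOfPred.mpr (by fun_prop)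

lemma sq_norm_node_le_of_mem_cell {y : Euc d} {J : Fin d → ℤ} (hy : y ∈ cell Δx J) :
    ‖node Δx J‖ ^ 2 ≤ 2 * ‖y‖ ^ 2 + 2 * ∑ i, Δx i ^ 2 := by
  have hdist : ‖node Δx J - y‖ ^ 2 ≤ ∑ i, Δx i ^ 2 := by
    rw [EuclideanSpace.real_norm_sq_eq]
    refine Finset.sum_le_sum fun i _ => ?_
    have := hy i
    rw [PiLp.sub_apply, node_apply]
    nlinarith
  have htri : ‖node Δx J‖ ≤ ‖y‖ + ‖node Δx J - y‖ := by
    simpa using norm_add_le y (node Δx J - y)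
  nlinarith [pow_le_pow_left₀ (norm_nonneg _) htri 2, sq_nonneg (‖y‖ - ‖node Δx J - y‖)]

lemma IsGridProbability.of_measure (hΔx : ∀ i, 0 < Δx i) (μ : Measure (Euc d))
    [IsProbabilityMeasure μ] (hμ : Integrable (fun x : Euc d => ‖x‖ ^ 2) μ) :
    IsGridProbability Δx fun J => (μ (cell Δx J)).toReal := by
  have hpart : ∀ g : Euc d → ℝ, Integrable g μ →
      HasSum (fun J => ∫ y in cell Δx J, g y ∂μ) (∫ y, g y ∂μ) := fun g hg => by
    simpa [iUnion_cell hΔx] using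
      hasSum_integral_iUnion measurableSet_cell (pairwise_disjoint_cell hΔx) hg.integrableOn
  refine ⟨fun _ => ENNReal.toReal_nonneg,
    by simpa [measureReal_def] using hpart 1 (integrable_const 1), ?_⟩
  set R := ∑ i, Δx i ^ 2
  refine Summable.of_nonneg_of_le (fun J => by positivity) (fun J => ?_)
    (hpart _ ((hμ.const_mul 2).add (integrable_const (2 * R)))).summable
  calc ‖node Δx J‖ ^ 2 * (μ (cell Δx J)).toReal = ∫ _ in cell Δx J, ‖node Δx J‖ ^ 2 ∂μ := by
        simp [measureReal_def, mul_comm]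
    _ ≤ ∫ y in cell Δx J, 2 * ‖y‖ ^ 2 + 2 * R ∂μ :=
        setIntegral_mono_on (integrableOn_const (measure_ne_top _ _))
          ((hμ.const_mul 2).add (integrable_const _)).integrableOn (measurableSet_cell J)
          fun y hy => sq_norm_node_le_of_mem_cell hy

end Cells

theorem stmt7_general {d : ℕ} (W : Euc d → ℝ) (winf : ℝ) (hwinf : 0 ≤ winf)
    (hbound : ∀ x : Euc d, x ≠ 0 → ‖gradient W x‖ ≤ winf)
    (Δx : Fin d → ℝ) (hΔx : ∀ i, 0 < Δx i) (Δt : ℝ) (hΔt : 0 < Δt)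
    (hCFL : winf * ∑ i, Δt / Δx i < 1 / 2)
    (ρini : Measure (Euc d)) [IsProbabilityMeasure ρini]
    (hmom2 : Integrable (fun x : Euc d => ‖x‖ ^ 2) ρini)
    (ρ : ℕ → (Fin d → ℤ) → ℝ)
    (h0 : ∀ J, ρ 0 J = (ρini (cell Δx J)).toReal)
    (hrec : ∀ n, ρ (n + 1) = upwindStep Δx Δt (discVel W Δx (ρ n)) (ρ n)) :
    ∃ C : ℝ, 0 ≤ C ∧ ∀ n : ℕ,
      Summable (fun J : Fin d → ℤ => ‖node Δx J‖ ^ 2 * ρ n J) ∧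
      ∑' J : Fin d → ℤ, ‖node Δx J‖ ^ 2 * ρ n J ≤
        Real.exp (C * (n * Δt)) * ((∑' J : Fin d → ℤ, ‖node Δx J‖ ^ 2 * ρ 0 J) + C) := by
  set C := winf * (d + ∑ i, Δx i)
  have hC : 0 ≤ C :=
    mul_nonneg hwinf (add_nonneg d.cast_nonneg (Finset.sum_nonneg fun i _ => (hΔx i).le))
  have hvel : ∀ n, IsGridProbability Δx (ρ n) → ∀ J i, |discVel W Δx (ρ n) J i| ≤ winf :=
    fun _ h => abs_discVel_le h.nonneg h.hasSum_one (norm_hatGrad_le hwinf hbound)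
  have hprob : ∀ n, IsGridProbability Δx (ρ n) := by
    intro n
    induction n with
    | zero => rw [funext h0]; exact .of_measure hΔx ρini hmom2
    | succ n ih => rw [hrec]; exact ih.upwindStep hΔx hΔt.le (hvel n ih) (by linarith)
  have hgrowth := le_exp_mul_of_le_one_add_mul (u := fun n => secondMoment Δx (ρ n) + 1)
    (c := C * Δt) (fun n => by linarith [(hprob n).secondMoment_nonneg]) fun n => by
      have := secondMoment_upwindStep_le hΔx hΔt.le hwinf (hvel n (hprob n)) (hprob n)
      rw [hrec]
      linarith
  refine ⟨C + 1, by linarith, fun n => ⟨(hprob n).summable_sq_norm, ?_⟩⟩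
  calc secondMoment Δx (ρ n) ≤ exp (C * Δt * n) * (secondMoment Δx (ρ 0) + 1) := by
        linarith [hgrowth n]
    _ ≤ exp ((C + 1) * (n * Δt)) * (secondMoment Δx (ρ 0) + (C + 1)) := by
        have := (hprob 0).secondMoment_nonneg
        gcongr exp ?_ * ?_
        · nlinarith [mul_nonneg (Nat.cast_nonneg n) hΔt.le]
        · linarith

/-- Bound on the discrete second moment of the upwind scheme. -/
theorem stmt7 {d : ℕ} (hd : 1 ≤ d) (W : Euc d → ℝ) (lam winf : ℝ) (hwinf : 0 ≤ winf)
    (hsymm : ∀ x : Euc d, W (-x) = W x) (hW0 : W 0 = 0)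
    (hconv : ConvexOn ℝ Set.univ (fun x : Euc d => W x - lam / 2 * ‖x‖ ^ 2))
    (hC1 : ContDiffOn ℝ 1 W {(0 : Euc d)}ᶜ)
    (hbound : ∀ x : Euc d, x ≠ 0 → ‖gradient W x‖ ≤ winf)
    (Δx : Fin d → ℝ) (hΔx : ∀ i, 0 < Δx i) (Δt : ℝ) (hΔt : 0 < Δt)
    (hCFL : winf * ∑ i, Δt / Δx i < 1 / 2)
    (ρini : Measure (Euc d)) [IsProbabilityMeasure ρini]
    (hmom2 : Integrable (fun x : Euc d => ‖x‖ ^ 2) ρini)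
    (ρ : ℕ → (Fin d → ℤ) → ℝ)
    (h0 : ∀ J, ρ 0 J = (ρini (cell Δx J)).toReal)
    (hrec : ∀ n, ρ (n + 1) = upwindStep Δx Δt (discVel W Δx (ρ n)) (ρ n)) :
    ∃ C : ℝ, 0 ≤ C ∧ ∀ n : ℕ,
      Summable (fun J : Fin d → ℤ => ‖node Δx J‖ ^ 2 * ρ n J) ∧
      ∑' J : Fin d → ℤ, ‖node Δx J‖ ^ 2 * ρ n J ≤
        Real.exp (C * (n * Δt)) * ((∑' J : Fin d → ℤ, ‖node Δx J‖ ^ 2 * ρ 0 J) + C) :=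
  stmt7_general W winf hwinf hbound Δx hΔx Δt hΔt hCFL ρini hmom2 ρ h0 hrec
end
end

section
/- Consider the one-dimensional finite volume upwind scheme with interface velocities: on the uniform grid x_i := iΔx with interfaces x_{i+1/2} := (i + 1/2)Δx, given nonnegative weights (ρ_i^n)_{i∈ℤ} with Σ_i ρ_i^n = 1, set a_{i+1/2}^n := −Σ_{k∈ℤ} ρ_k^n s(x_{i+1/2} − x_k), where s(z) := sign(z) with s(0) := 0, and ρ_i^{n+1} := ρ_i^n − (Δt/Δx)[(a_{i+1/2}^n)⁺ ρ_i^n − (a_{i+1/2}^n)⁻ ρ_{i+1}^n − (a_{i−1/2}^n)⁺ ρ_{i−1}^n + (a_{i−1/2}^n)⁻ ρ_i^n]. If for some integers i_1 < i_2 one has ρ_{i_1}^n = ρ_{i_2}^n = 1/2 and ρ_i^n = 0 for all i ∉ {i_1, i_2}, then ρ_i^{n+1} = ρ_i^n for all i ∈ ℤ: the two Dirac masses are stationary for this scheme (whereas the exact solution moves them toward each other). -/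
open scoped BigOperators

noncomputable section

/-!
The velocity `a_{i+1/2}` at an interface is the mass to its right minus the mass to its left.
For two masses `1/2` at `i₁ < i₂` it is `1` left of `i₁`, `0` between them and `-1` right of
`i₂`, so at every interface the upwind flux `a⁺ ρ_i - a⁻ ρ_{i+1}` either has zero velocity or
reads the density of an empty cell. All fluxes vanish, hence the scheme does not move the
masses.
-/

lemma pos_eq_zero_of_nonpos {r : ℝ} (hr : r ≤ 0) : pos r = 0 := max_eq_right hr

lemma neg_eq_zero_of_nonneg {r : ℝ} (hr : 0 ≤ r) : neg r = 0 :=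
  max_eq_right (neg_nonpos.mpr hr)

lemma sign_interface_sub_node {Δx : ℝ} (hΔx : 0 < Δx) (i k : ℤ) :
    Real.sign (((i : ℝ) + 1 / 2) * Δx - (k : ℝ) * Δx) = if k ≤ i then 1 else -1 := by
  have h : ((i : ℝ) + 1 / 2) * Δx - (k : ℝ) * Δx = ((i : ℝ) - k + 1 / 2) * Δx := by ring
  rw [h]
  split_ifs with hki
  · apply Real.sign_of_pos
    have : (k : ℝ) ≤ i := by exact_mod_cast hki
    positivity
  · apply Real.sign_of_neg
    have : (i : ℝ) + 1 ≤ k := by exact_mod_cast Int.add_one_le_iff.mpr (not_le.mp hki)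
    exact mul_neg_of_neg_of_pos (by linarith) hΔx

lemma interface_velocity_eq_sum {Δx : ℝ} (hΔx : 0 < Δx) {ρ : ℤ → ℝ} {s : Finset ℤ}
    (hs : ∀ k ∉ s, ρ k = 0) (i : ℤ) :
    -∑' k : ℤ, ρ k * Real.sign (((i : ℝ) + 1 / 2) * Δx - (k : ℝ) * Δx)
      = ∑ k ∈ s, ρ k * (if k ≤ i then -1 else 1) := by
  rw [tsum_eq_sum (fun k hk => by rw [hs k hk, zero_mul]), ← Finset.sum_neg_distrib]
  refine Finset.sum_congr rfl fun k _ => ?_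
  rw [sign_interface_sub_node hΔx]
  split_ifs <;> ring

def upwindFlux (a ρ : ℤ → ℝ) (i : ℤ) : ℝ := pos (a i) * ρ i - neg (a i) * ρ (i + 1)

lemma upwindFlux_eq_zero {a ρ : ℤ → ℝ} {i : ℤ} (hleft : a i ≤ 0 ∨ ρ i = 0)
    (hright : 0 ≤ a i ∨ ρ (i + 1) = 0) : upwindFlux a ρ i = 0 := by
  unfold upwindFlux
  rcases hleft with ha | hρ <;> rcases hright with ha' | hρ' <;>
    simp [pos_eq_zero_of_nonpos, neg_eq_zero_of_nonneg, *]

lemma upwindFlux_two_masses_eq_zero {a ρ : ℤ → ℝ} {i₁ i₂ : ℤ} (h12 : i₁ < i₂)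
    (hzero : ∀ i, i ≠ i₁ → i ≠ i₂ → ρ i = 0)
    (ha : ∀ i, a i
      = 1 / 2 * (if i₁ ≤ i then -1 else 1) + 1 / 2 * (if i₂ ≤ i then -1 else 1))
    (i : ℤ) : upwindFlux a ρ i = 0 := by
  rcases lt_or_ge i i₁ with h₁ | h₁
  · have hai : a i = 1 := by rw [ha, if_neg (by omega), if_neg (by omega)]; norm_num
    exact upwindFlux_eq_zero (Or.inr (hzero i (by omega) (by omega)))
      (Or.inl (by rw [hai]; norm_num))
  rcases lt_or_ge i i₂ with h₂ | h₂
  · have hai : a i = 0 := by rw [ha, if_pos h₁, if_neg (by omega)]; norm_num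
    exact upwindFlux_eq_zero (Or.inl hai.le) (Or.inl hai.ge)
  · have hai : a i = -1 := by rw [ha, if_pos h₁, if_pos h₂]; norm_num
    exact upwindFlux_eq_zero (Or.inl (by rw [hai]; norm_num))
      (Or.inr (hzero (i + 1) (by omega) (by omega)))

theorem stmt15_general (Δx Δt : ℝ) (hΔx : 0 < Δx)
    (ρ : ℤ → ℝ)
    (i1 i2 : ℤ) (h12 : i1 < i2)
    (hi1 : ρ i1 = 1 / 2) (hi2 : ρ i2 = 1 / 2)
    (hzero : ∀ i, i ≠ i1 → i ≠ i2 → ρ i = 0)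
    (ah : ℤ → ℝ)
    (hah : ∀ i : ℤ, ah i = -∑' k : ℤ, ρ k * Real.sign (((i : ℝ) + 1 / 2) * Δx - (k : ℝ) * Δx))
    (ρ' : ℤ → ℝ)
    (hρ' : ∀ i : ℤ, ρ' i = ρ i - (Δt / Δx) *
      (pos (ah i) * ρ i - neg (ah i) * ρ (i + 1)
        - pos (ah (i - 1)) * ρ (i - 1) + neg (ah (i - 1)) * ρ i)) :
    ∀ i : ℤ, ρ' i = ρ i := by
  have hsupp : ∀ k ∉ ({i1, i2} : Finset ℤ), ρ k = 0 := fun k hk => by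
    simp only [Finset.mem_insert, Finset.mem_singleton, not_or] at hk
    exact hzero k hk.1 hk.2
  have hvel : ∀ i, ah i
      = 1 / 2 * (if i1 ≤ i then -1 else 1) + 1 / 2 * (if i2 ≤ i then -1 else 1) := fun i => by
    rw [hah, interface_velocity_eq_sum hΔx hsupp, Finset.sum_pair h12.ne, hi1, hi2]
  have hflux := upwindFlux_two_masses_eq_zero h12 hzero hvel
  intro i
  have hscheme : ρ' i = ρ i - Δt / Δx * (upwindFlux ah ρ i - upwindFlux ah ρ (i - 1)) := by
    rw [hρ', upwindFlux, upwindFlux, sub_add_cancel]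
    ring
  rw [hscheme, hflux, hflux, sub_self, mul_zero, sub_zero]

/-- For the 1D finite volume upwind scheme with velocities computed at the interfaces
(for the potential `W(x) = |x|`), two Dirac masses of weight `1/2` are stationary. -/
theorem stmt15 (Δx Δt : ℝ) (hΔx : 0 < Δx) (hΔt : 0 < Δt)
    (ρ : ℤ → ℝ) (hpos : ∀ i, 0 ≤ ρ i) (hsum : HasSum ρ 1)
    (i1 i2 : ℤ) (h12 : i1 < i2)
    (hi1 : ρ i1 = 1 / 2) (hi2 : ρ i2 = 1 / 2)
    (hzero : ∀ i, i ≠ i1 → i ≠ i2 → ρ i = 0)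
    (ah : ℤ → ℝ)
    (hah : ∀ i : ℤ, ah i = -∑' k : ℤ, ρ k * Real.sign (((i : ℝ) + 1 / 2) * Δx - (k : ℝ) * Δx))
    (ρ' : ℤ → ℝ)
    (hρ' : ∀ i : ℤ, ρ' i = ρ i - (Δt / Δx) *
      (pos (ah i) * ρ i - neg (ah i) * ρ (i + 1)
        - pos (ah (i - 1)) * ρ (i - 1) + neg (ah (i - 1)) * ρ i)) :
    ∀ i : ℤ, ρ' i = ρ i :=
  stmt15_general Δx Δt hΔx ρ i1 i2 h12 hi1 hi2 hzero ah hah ρ' hρ'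
end
end
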